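/- arXiv:0904.2957 — 5 statements merged into one kernel-verified Lean document; each statement's English description precedes it below -/
import Mathlib

section
/- Löb's Theorem (abstract form, the paper's Lemma 3): Let α be a Boolean algebra and box : α → α an operator satisfying the derivability conditions (P1)–(P3). Let a ∈ α and suppose there exists a diagonal fixed point g for a, i.e. g = (box g ⇨ a). If box a ≤ a (i.e. the implication box a ⇨ a is provable), then a = ⊤ (a is provable). -/
/-- Löb's Theorem (abstract form): in a Boolean algebra with a provability
operator `box` satisfying the Hilbert–Bernays–Löb derivability conditions,
if `a` has a diagonal fixed point `g = (box g ⇨ a)` and `box a ≤ a`,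
then `a = ⊤`. -/
theorem loeb_theorem {α : Type*} [BooleanAlgebra α] (box : α → α)
    (P1 : ∀ x : α, x = ⊤ → box x = ⊤)
    (P2 : ∀ x y : α, box (x ⇨ y) ⊓ box x ≤ box y)
    (P3 : ∀ x : α, box x ≤ box (box x))
    (a : α) (hdiag : ∃ g : α, g = (box g ⇨ a))
    (h : box a ≤ a) : a = ⊤ := by
  obtain ⟨g, hg⟩ := hdiag
  have h1 : box g ≤ box a := by
    have : box (box g ⇨ a) ⊓ box (box g) ≤ box a := P2 _ _
    calc box g ≤ box g ⊓ box (box g) := le_inf le_rfl (P3 g)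
      _ = box (box g ⇨ a) ⊓ box (box g) := by rw [← hg]
      _ ≤ box a := this
  have h2 : box g ≤ a := h1.trans h
  have hgtop : g = ⊤ := by rw [hg]; exact himp_eq_top_iff.mpr h2
  have : box g = ⊤ := P1 g hgtop
  exact top_le_iff.mp (this ▸ h2)
end

section
/- Gödel's Second Incompleteness Theorem (abstract form, the paper's Lemma 4): Let α be a Boolean algebra and box : α → α an operator satisfying the derivability conditions (P1)–(P3), and assume every element b of α has a diagonal fixed point g = (box g ⇨ b). If the algebra is consistent (⊥ ≠ ⊤) and a ∈ α is provable (a = ⊤), then the element (box aᶜ)ᶜ, asserting the unprovability of the negation of a, is not provable: (box aᶜ)ᶜ ≠ ⊤. -/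
/-- Gödel's Second Incompleteness Theorem (abstract form): in a consistent
Boolean provability algebra with diagonal fixed points, if `a` is provable
then the element `(box aᶜ)ᶜ` (asserting the unprovability of the negation
of `a`) is not provable. -/
theorem second_incompleteness_abstract {α : Type*} [BooleanAlgebra α] (box : α → α)
    (P1 : ∀ x : α, x = ⊤ → box x = ⊤)
    (P2 : ∀ x y : α, box (x ⇨ y) ⊓ box x ≤ box y)
    (P3 : ∀ x : α, box x ≤ box (box x))
    (diag : ∀ b : α, ∃ g : α, g = (box g ⇨ b))
    (consistent : (⊥ : α) ≠ ⊤)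
    (a : α) (ha : a = ⊤) : (box aᶜ)ᶜ ≠ ⊤ := by
  intro h
  -- from the hypothesis, box ⊥ = ⊥
  have hbb : box (⊥ : α) = ⊥ := by
    have : box aᶜ = ⊥ := compl_eq_top.mp h
    simpa [ha] using this
  -- Löb with x = ⊥ via Gödel sentence
  obtain ⟨g, hg⟩ := diag ⊥
  have hmono : box g ≤ box (box g ⇨ ⊥) := by rw [← hg]
  have h1 : box g ≤ box (⊥ : α) := by
    calc box g ≤ box (box g ⇨ ⊥) ⊓ box (box g) := le_inf hmono (P3 g)
    _ ≤ box ⊥ := P2 _ _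
  have h2 : box g ≤ ⊥ := h1.trans hbb.le
  have hgtop : g = ⊤ := by
    rw [hg, himp_eq_top_iff]
    exact h2.trans bot_le
  have : box g = ⊤ := P1 g hgtop
  exact consistent (le_antisymm bot_le (le_top.trans (this ▸ h2 : (⊤:α) ≤ ⊥)))
end

section
/- Main Theorem (abstract form): Let α be a Boolean algebra and box : α → α an operator satisfying the derivability conditions (P1)–(P3), assume every element b of α has a diagonal fixed point g = (box g ⇨ b), assume the algebra is consistent (⊥ ≠ ⊤), and assume reflection holds (for every x, box x = ⊤ implies x = ⊤). Then for every provable element a (a = ⊤), the element (box aᶜ)ᶜ is undecidable: (box aᶜ)ᶜ ≠ ⊤ and box aᶜ ≠ ⊤, i.e. neither it nor its negation is provable. -/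
/-- Main Theorem (abstract form): in a consistent Boolean provability algebra
with diagonal fixed points and reflection, for every provable `a` the element
`(box aᶜ)ᶜ` is undecidable: neither it nor its negation is provable. -/
theorem undecidable_from_provable {α : Type*} [BooleanAlgebra α] (box : α → α)
    (P1 : ∀ x : α, x = ⊤ → box x = ⊤)
    (P2 : ∀ x y : α, box (x ⇨ y) ⊓ box x ≤ box y)
    (P3 : ∀ x : α, box x ≤ box (box x))
    (diag : ∀ b : α, ∃ g : α, g = (box g ⇨ b))
    (consistent : (⊥ : α) ≠ ⊤)
    (reflection : ∀ x : α, box x = ⊤ → x = ⊤)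
    (a : α) (ha : a = ⊤) : (box aᶜ)ᶜ ≠ ⊤ ∧ box aᶜ ≠ ⊤ := by
  subst ha
  rw [compl_top]
  have hbox : box (⊥ : α) ≠ ⊥ := by
    intro h
    obtain ⟨g, hg⟩ := diag (⊥ : α)
    have h1 : box g ≤ box (box g ⇨ (⊥ : α)) := le_of_eq (by rw [← hg])
    have h2 : box g ≤ box (⊥ : α) :=
      le_trans (le_inf h1 (P3 g)) (P2 _ _)
    have h3 : box g ≤ (⊥ : α) := h2.trans (le_of_eq h)
    have hgtop : g = ⊤ := by
      rw [hg]; exact himp_eq_top_iff.mpr h3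
    have : box g = ⊤ := P1 g hgtop
    exact consistent (le_antisymm le_top (this ▸ h3) : (⊥:α) = ⊤)
  constructor
  · intro h
    exact hbox (compl_eq_top.mp h)
  · intro h
    exact consistent (reflection _ h)
end

section
/- Henkin sentence (consequence of Löb's Theorem): Let α be a Boolean algebra and box : α → α an operator satisfying the derivability conditions (P1)–(P3), and assume every element b of α has a diagonal fixed point g = (box g ⇨ b). If h ∈ α satisfies h = box h (a Henkin fixed point, asserting its own provability), then h = ⊤, i.e. h is provable. -/
/-- Henkin sentence: in a Boolean provability algebra with diagonal fixed
points, any element `h` with `h = box h` is provable. -/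
theorem henkin_sentence_provable {α : Type*} [BooleanAlgebra α] (box : α → α)
    (P1 : ∀ x : α, x = ⊤ → box x = ⊤)
    (P2 : ∀ x y : α, box (x ⇨ y) ⊓ box x ≤ box y)
    (P3 : ∀ x : α, box x ≤ box (box x))
    (diag : ∀ b : α, ∃ g : α, g = (box g ⇨ b))
    (h : α) (hh : h = box h) : h = ⊤ := by
  obtain ⟨g, hg⟩ := diag h
  have h1 : box (g ⇨ (box g ⇨ h)) = ⊤ := P1 _ (by rw [← hg]; simp)
  have h2 : box g ≤ box (box g ⇨ h) := by
    have := P2 g (box g ⇨ h)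
    rw [h1, top_inf_eq] at this
    exact this
  have h3 : box g ≤ box h := by
    calc box g ≤ box (box g ⇨ h) ⊓ box (box g) := le_inf h2 (P3 g)
    _ ≤ box h := P2 _ _
  have h4 : box g ≤ h := h3.trans (le_of_eq hh.symm)
  have h5 : g = ⊤ := by rw [hg]; exact himp_eq_top_iff.mpr h4
  have h6 : box g = ⊤ := P1 g h5
  rw [h6] at h4
  exact top_le_iff.mp h4
end

section
/- Gödel sentence, undecidability: Let α be a Boolean algebra and box : α → α an operator satisfying the derivability conditions (P1)–(P3), suppose the algebra is consistent (⊥ ≠ ⊤) and satisfies reflection (for every x, box x = ⊤ implies x = ⊤). If g ∈ α satisfies g = (box g)ᶜ, then g is undecidable: g ≠ ⊤ and gᶜ ≠ ⊤. -/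
/-- Gödel sentence, undecidability: in a consistent Boolean provability
algebra satisfying reflection, any Gödel fixed point `g = (box g)ᶜ` is
undecidable: neither `g` nor `gᶜ` is provable. -/
theorem goedel_sentence_undecidable {α : Type*} [BooleanAlgebra α] (box : α → α)
    (P1 : ∀ x : α, x = ⊤ → box x = ⊤)
    (P2 : ∀ x y : α, box (x ⇨ y) ⊓ box x ≤ box y)
    (P3 : ∀ x : α, box x ≤ box (box x))
    (consistent : (⊥ : α) ≠ ⊤)
    (reflection : ∀ x : α, box x = ⊤ → x = ⊤)
    (g : α) (hg : g = (box g)ᶜ) : g ≠ ⊤ ∧ gᶜ ≠ ⊤ := by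
  have hbox : box g = gᶜ := ((congrArg compl hg).trans (compl_compl _)).symm
  constructor
  · intro h
    have : box g = ⊤ := P1 g h
    rw [hg, this, compl_top] at h
    exact consistent h
  · intro h
    have hb : box g = ⊤ := hbox.trans h
    have hgtop : g = ⊤ := reflection g hb
    rw [hgtop, compl_top] at h
    exact consistent h
end
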